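/- Let r = gcd(m,n), a = m/r, b = n/r, and let M ∈ M_{r×r}(ℝ) be orthogonal (MᵀM = I_r). Then the map ψ : M_{m×n} → M_{m×n}, A ↦ (M ⊗ I_a)·A·(Mᵀ ⊗ I_b), is a ring automorphism of (M_{m×n}, +, ⊛); in particular (Mᵀ ⊗ I_b)·Ψ_{n×m}·(M ⊗ I_a) = Ψ_{n×m}. -/

import Mathlib

/-!
Since `A ⊛ B = A Ψ B` with `Ψ = Ψ_{n×m}`, the map `ψ A = P A Qᵀ` (with `P = M ⊗ I_a`, `Q = M ⊗ I_b`)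
respects `⊛` as soon as `Qᵀ Ψ P = Ψ`. For `m = r a`, `n = r b` one has `t = lcm(m,n) = r a b`, and
splitting indices into a block number and an offset shows `Ψ = I_r ⊗ W`; hence
`Qᵀ Ψ P = (Mᵀ M) ⊗ W = I_r ⊗ W = Ψ`. Orthogonality of `P` and `Q` makes `ψ` bijective, with inverse
`A ↦ Pᵀ A Q`.
-/

open Matrix Kronecker Finset

noncomputable section

/-- The all-ones column vector of length `k`, viewed as a `k × 1` matrix. -/
def onesCol (k : ℕ) : Matrix (Fin k) (Fin 1) ℝ := Matrix.of fun _ _ => 1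

/-- `A ⊗ 1ᵀ_α`, reindexed to an ordinary `Fin`-indexed matrix. -/
def rightExpand {m n : ℕ} (A : Matrix (Fin m) (Fin n) ℝ) (α : ℕ) :
    Matrix (Fin m) (Fin (n * α)) ℝ :=
  Matrix.reindex (Equiv.prodUnique (Fin m) (Fin 1)) finProdFinEquiv (A ⊗ₖ (onesCol α)ᵀ)

/-- `B ⊗ 1_β`, reindexed to an ordinary `Fin`-indexed matrix. -/
def leftExpand {p q : ℕ} (B : Matrix (Fin p) (Fin q) ℝ) (β : ℕ) :
    Matrix (Fin (p * β)) (Fin q) ℝ :=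
  Matrix.reindex finProdFinEquiv (Equiv.prodUnique (Fin q) (Fin 1)) (B ⊗ₖ onesCol β)

theorem dk_dim_eq (n p : ℕ) :
    n * (Nat.lcm n p / n) = p * (Nat.lcm n p / p) := by
  rw [Nat.mul_div_cancel' (Nat.dvd_lcm_left n p),
    Nat.mul_div_cancel' (Nat.dvd_lcm_right n p)]

/-- The dimension keeping semi-tensor product (DK-STP)
`A ⊛ B := (A ⊗ 1ᵀ_{t/n})(B ⊗ 1_{t/p})`, `t = lcm(n,p)`. -/
def dkstp {m n p q : ℕ} (A : Matrix (Fin m) (Fin n) ℝ) (B : Matrix (Fin p) (Fin q) ℝ) :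
    Matrix (Fin m) (Fin q) ℝ :=
  rightExpand A (Nat.lcm n p / n) *
    (leftExpand B (Nat.lcm n p / p)).submatrix (Fin.cast (dk_dim_eq n p)) id

infixl:70 " ⊛ " => dkstp

/-- The bridge matrix `Ψ_{n×p} := (I_n ⊗ 1ᵀ_{t/n})(I_p ⊗ 1_{t/p})`. -/
def bridge (n p : ℕ) : Matrix (Fin n) (Fin p) ℝ :=
  (1 : Matrix (Fin n) (Fin n) ℝ) ⊛ (1 : Matrix (Fin p) (Fin p) ℝ)

/-- `x ⊗ 1_α`, as a vector of length `m * α`. -/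
def vecExpand {m : ℕ} (x : Fin m → ℝ) (α : ℕ) : Fin (m * α) → ℝ :=
  fun i => x (finProdFinEquiv.symm i).1

/-- The VV-STP `x ⊙ y := (x ⊗ 1_{t/m})ᵀ(y ⊗ 1_{t/n})`, `t = lcm(m,n)`. -/
def vvstp {m n : ℕ} (x : Fin m → ℝ) (y : Fin n → ℝ) : ℝ :=
  vecExpand x (Nat.lcm m n / m) ⬝ᵥ
    fun i => vecExpand y (Nat.lcm m n / n) (Fin.cast (dk_dim_eq m n) i)


/-- `M ⊗ I_{k/r}`, reindexed and cast to a `k × k` matrix (for `r ∣ k`). -/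
def blowup (r k : ℕ) (M : Matrix (Fin r) (Fin r) ℝ) (h : r * (k / r) = k) :
    Matrix (Fin k) (Fin k) ℝ :=
  (Matrix.reindex finProdFinEquiv finProdFinEquiv
      (M ⊗ₖ (1 : Matrix (Fin (k / r)) (Fin (k / r)) ℝ))).submatrix
    (Fin.cast h.symm) (Fin.cast h.symm)

theorem rightExpand_eq_mul {m n : ℕ} (A : Matrix (Fin m) (Fin n) ℝ) (α : ℕ) :
    rightExpand A α = A * rightExpand (1 : Matrix (Fin n) (Fin n) ℝ) α := by
  ext i j
  simp [rightExpand, onesCol, mul_apply, one_apply]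

theorem leftExpand_eq_mul {p q : ℕ} (B : Matrix (Fin p) (Fin q) ℝ) (β : ℕ) :
    leftExpand B β = leftExpand (1 : Matrix (Fin p) (Fin p) ℝ) β * B := by
  ext i j
  simp [leftExpand, onesCol, mul_apply, one_apply]

theorem rightExpand_one_apply {n : ℕ} (α : ℕ) (i : Fin n) (j : Fin (n * α)) :
    rightExpand (1 : Matrix (Fin n) (Fin n) ℝ) α i j = if (i : ℕ) = j / α then 1 else 0 := by
  simp [rightExpand, onesCol, one_apply, Fin.ext_iff]

theorem leftExpand_one_apply {p : ℕ} (β : ℕ) (i : Fin (p * β)) (j : Fin p) :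
    leftExpand (1 : Matrix (Fin p) (Fin p) ℝ) β i j = if (i : ℕ) / β = j then 1 else 0 := by
  simp [leftExpand, onesCol, one_apply, Fin.ext_iff]

/-- `(I_n ⊗ 1ᵀ_α)(I_p ⊗ 1_β)`. With `α = t/n`, `β = t/p` this is `bridge n p`; for coprime `a`, `b`,
`expandBridge b a a b` is the block `W = (I_b ⊗ 1ᵀ_a)(I_a ⊗ 1_b)` of `Ψ_{n×m} = I_r ⊗ W`. -/
def expandBridge (n p α β : ℕ) (h : n * α = p * β) : Matrix (Fin n) (Fin p) ℝ :=
  rightExpand (1 : Matrix (Fin n) (Fin n) ℝ) α *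
    (leftExpand (1 : Matrix (Fin p) (Fin p) ℝ) β).submatrix (Fin.cast h) id

theorem bridge_eq_expandBridge (n p : ℕ) :
    bridge n p = expandBridge n p _ _ (dk_dim_eq n p) := rfl

theorem dkstp_eq_mul_bridge_mul {m n p q : ℕ} (A : Matrix (Fin m) (Fin n) ℝ)
    (B : Matrix (Fin p) (Fin q) ℝ) : A ⊛ B = A * bridge n p * B := by
  rw [dkstp, bridge_eq_expandBridge, expandBridge, rightExpand_eq_mul A, leftExpand_eq_mul B,
    submatrix_mul _ _ _ id _ Function.bijective_id, submatrix_id_id, Matrix.mul_assoc,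
    Matrix.mul_assoc, Matrix.mul_assoc]

theorem expandBridge_apply {n p α β : ℕ} (h : n * α = p * β) (i : Fin n) (j : Fin p) :
    expandBridge n p α β h i j =
      ∑ k : Fin (n * α), if (i : ℕ) = k / α ∧ (k : ℕ) / β = j then 1 else 0 := by
  rw [expandBridge, Matrix.mul_apply]
  simp only [rightExpand_one_apply, submatrix_apply, id, leftExpand_one_apply, Fin.val_cast,
    ite_zero_mul_ite_zero, mul_one]

theorem Nat.eq_add_mul_div_iff {a b c u i : ℕ} (ha : 0 < a) (hu : u < b * a) :
    i = (u + b * a * c) / a ↔ i / b = c ∧ i % b = u / a := by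
  have hua : u / a < b := Nat.div_lt_of_lt_mul (by rwa [mul_comm])
  rw [Nat.div_mod_unique (Nat.zero_le _ |>.trans_lt hua), mul_right_comm,
    Nat.add_mul_div_right _ _ ha]
  tauto

theorem expandBridge_eq_kronecker {r a b n p : ℕ} (hn : r * b = n) (hp : r * a = p)
    (h : n * a = p * b) :
    expandBridge n p a b h =
      ((1 : Matrix (Fin r) (Fin r) ℝ) ⊗ₖ expandBridge b a a b (mul_comm b a)).submatrix
        ((finCongr hn.symm).trans finProdFinEquiv.symm)
        ((finCongr hp.symm).trans finProdFinEquiv.symm) := by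
  subst hn hp
  ext i j
  have ha : 0 < a := Nat.pos_of_ne_zero fun ha => by subst ha; exact j.elim0
  have hb : 0 < b := Nat.pos_of_ne_zero fun hb => by subst hb; exact i.elim0
  have hib : (i : ℕ) / b < r := Nat.div_lt_of_lt_mul (by simp [mul_comm])
  have hblock (c u : ℕ) (hu : u < b * a) :
      ((i : ℕ) = (u + b * a * c) / a ∧ (u + b * a * c) / b = (j : ℕ)) ↔
        ((i : ℕ) / b = c ∧ (j : ℕ) / a = c) ∧ ((i : ℕ) % b = u / a ∧ u / b = j % a) := by
    rw [Nat.eq_add_mul_div_iff ha hu, eq_comm (b := (j : ℕ)), mul_comm b a,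
      Nat.eq_add_mul_div_iff hb (mul_comm b a ▸ hu)]
    tauto
  -- split the summation index `k < r * b * a` as `k = u + b * a * c` with `c < r`, `u < b * a`
  rw [expandBridge_apply, ← (finProdFinEquiv.trans (finCongr (mul_assoc r b a).symm)).sum_comp,
    Fintype.sum_prod_type, Fintype.sum_eq_single ⟨i / b, hib⟩]
  · simp only [submatrix_apply, kroneckerMap_apply, Equiv.trans_apply, finCongr_apply,
      finProdFinEquiv_symm_apply, one_apply, expandBridge_apply, Finset.mul_sum,
      ite_zero_mul_ite_zero, mul_one]
    refine Finset.sum_congr rfl fun u _ => ?_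
    simp only [Fin.val_cast, finProdFinEquiv_apply_val, hblock _ _ u.isLt, Fin.ext_iff,
      Fin.coe_divNat, Fin.coe_modNat, true_and, eq_comm (a := (j : ℕ) / a)]
  · intro c hc
    refine Finset.sum_eq_zero fun u _ => if_neg ?_
    simp only [Equiv.trans_apply, finCongr_apply, Fin.val_cast, finProdFinEquiv_apply_val,
      hblock _ _ u.isLt]
    exact fun h => hc (Fin.ext h.1.1.symm)

theorem blowup_eq_submatrix {r k b : ℕ} (M : Matrix (Fin r) (Fin r) ℝ)
    (h : r * (k / r) = k) (hb : r * b = k) :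
    blowup r k M h =
      (M ⊗ₖ (1 : Matrix (Fin b) (Fin b) ℝ)).submatrix
        ((finCongr hb.symm).trans finProdFinEquiv.symm)
        ((finCongr hb.symm).trans finProdFinEquiv.symm) := by
  rcases Nat.eq_zero_or_pos r with rfl | hr
  · obtain rfl : k = 0 := by simpa using hb.symm
    exact Subsingleton.elim _ _
  · obtain rfl : b = k / r := by rw [← hb, Nat.mul_div_cancel_left b hr]
    rfl

theorem blowup_transpose {r k : ℕ} (M : Matrix (Fin r) (Fin r) ℝ) (h : r * (k / r) = k) :
    (blowup r k M h)ᵀ = blowup r k Mᵀ h := by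
  rw [blowup_eq_submatrix M h h, blowup_eq_submatrix Mᵀ h h, transpose_submatrix,
    ← kroneckerMap_transpose, transpose_one]

theorem blowup_mul {r k : ℕ} (M N : Matrix (Fin r) (Fin r) ℝ) (h : r * (k / r) = k) :
    blowup r k M h * blowup r k N h = blowup r k (M * N) h := by
  rw [blowup_eq_submatrix M h h, blowup_eq_submatrix N h h, blowup_eq_submatrix (M * N) h h,
    submatrix_mul_equiv, ← mul_kronecker_mul, Matrix.one_mul]

theorem blowup_one {r k : ℕ} (h : r * (k / r) = k) :
    blowup r k (1 : Matrix (Fin r) (Fin r) ℝ) h = 1 := by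
  rw [blowup_eq_submatrix 1 h h, one_kronecker_one, submatrix_one_equiv]

theorem blowup_transpose_mul_self {r k : ℕ} {M : Matrix (Fin r) (Fin r) ℝ} (hM : Mᵀ * M = 1)
    (h : r * (k / r) = k) : (blowup r k M h)ᵀ * blowup r k M h = 1 := by
  rw [blowup_transpose, blowup_mul, hM, blowup_one]

theorem blowup_transpose_mul_expandBridge_mul_blowup {r a b n p : ℕ}
    {M : Matrix (Fin r) (Fin r) ℝ} (hM : Mᵀ * M = 1) (hn' : r * (n / r) = n)
    (hp' : r * (p / r) = p) (hn : r * b = n) (hp : r * a = p) (h : n * a = p * b) :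
    (blowup r n M hn')ᵀ * expandBridge n p a b h * blowup r p M hp' = expandBridge n p a b h := by
  rw [blowup_transpose, blowup_eq_submatrix Mᵀ hn' hn, blowup_eq_submatrix M hp' hp,
    expandBridge_eq_kronecker hn hp, submatrix_mul_equiv, submatrix_mul_equiv,
    ← mul_kronecker_mul, ← mul_kronecker_mul, Matrix.mul_one, Matrix.one_mul, Matrix.mul_one, hM]

theorem Nat.lcm_div_left_eq_div_gcd {m n : ℕ} (hn : 0 < n) :
    Nat.lcm n m / n = m / Nat.gcd m n := by
  rw [Nat.lcm, Nat.gcd_comm, Nat.mul_div_assoc _ (Nat.gcd_dvd_left m n),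
    Nat.mul_div_cancel_left _ hn]

theorem blowup_transpose_mul_bridge_mul_blowup {m n : ℕ}
    {M : Matrix (Fin (Nat.gcd m n)) (Fin (Nat.gcd m n)) ℝ} (hM : Mᵀ * M = 1)
    (hn : Nat.gcd m n * (n / Nat.gcd m n) = n) (hm : Nat.gcd m n * (m / Nat.gcd m n) = m) :
    (blowup _ n M hn)ᵀ * bridge n m * blowup _ m M hm = bridge n m := by
  rcases Nat.eq_zero_or_pos m with rfl | hm0
  · exact Subsingleton.elim _ _
  rcases Nat.eq_zero_or_pos n with rfl | hn0
  · exact Subsingleton.elim _ _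
  rw [bridge_eq_expandBridge]
  refine blowup_transpose_mul_expandBridge_mul_blowup hM hn hm ?_ ?_ _
  · rwa [Nat.lcm_comm, Nat.lcm_div_left_eq_div_gcd hm0, Nat.gcd_comm n m]
  · rwa [Nat.lcm_div_left_eq_div_gcd hn0]

theorem mul_mul_mul_eq_of_mul_mul_eq {R k l m n : Type*} [Semiring R] [Fintype k] [Fintype l]
    [Fintype m] [Fintype n] {P : Matrix k m R} {Q : Matrix n l R} {Ψ : Matrix n m R}
    {Ψ' : Matrix l k R} (hΨ : Q * Ψ' * P = Ψ) (A B : Matrix m n R) :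
    P * (A * Ψ * B) * Q = (P * A * Q) * Ψ' * (P * B * Q) := by
  rw [← hΨ]
  simp only [Matrix.mul_assoc]

theorem bijective_mul_mul_transpose {R m n : Type*} [CommRing R] [Fintype m] [Fintype n]
    [DecidableEq m] [DecidableEq n] {P : Matrix m m R} {Q : Matrix n n R}
    (hP : Pᵀ * P = 1) (hQ : Qᵀ * Q = 1) :
    Function.Bijective fun A : Matrix m n R => P * A * Qᵀ := by
  refine Function.bijective_iff_has_inverse.mpr ⟨fun A => Pᵀ * A * Q, fun A => ?_, fun A => ?_⟩
  · simp only [Matrix.mul_assoc, hQ, Matrix.mul_one, ← Matrix.mul_assoc Pᵀ, hP, Matrix.one_mul]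
  · simp only [Matrix.mul_assoc, mul_eq_one_comm.mp hQ, Matrix.mul_one, ← Matrix.mul_assoc P,
      mul_eq_one_comm.mp hP, Matrix.one_mul]

/-- for `r = gcd(m,n)`, `a = m/r`, `b = n/r` and `M ∈ O(r)`,
the map `ψ : A ↦ (M ⊗ I_a) A (Mᵀ ⊗ I_b)` is a ring automorphism of
`(M_{m×n}, +, ⊛)`; in particular `(Mᵀ ⊗ I_b) Ψ_{n×m} (M ⊗ I_a) = Ψ_{n×m}`. -/
theorem stmt13 {m n : ℕ} (M : Matrix (Fin (Nat.gcd m n)) (Fin (Nat.gcd m n)) ℝ)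
    (hM : Mᵀ * M = 1) :
    (∀ A B : Matrix (Fin m) (Fin n) ℝ,
      blowup (Nat.gcd m n) m M (Nat.mul_div_cancel' (Nat.gcd_dvd_left m n)) * (A + B) *
          (blowup (Nat.gcd m n) n M (Nat.mul_div_cancel' (Nat.gcd_dvd_right m n)))ᵀ =
        blowup (Nat.gcd m n) m M (Nat.mul_div_cancel' (Nat.gcd_dvd_left m n)) * A *
            (blowup (Nat.gcd m n) n M (Nat.mul_div_cancel' (Nat.gcd_dvd_right m n)))ᵀ +
          blowup (Nat.gcd m n) m M (Nat.mul_div_cancel' (Nat.gcd_dvd_left m n)) * B *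
            (blowup (Nat.gcd m n) n M (Nat.mul_div_cancel' (Nat.gcd_dvd_right m n)))ᵀ) ∧
    (∀ A B : Matrix (Fin m) (Fin n) ℝ,
      blowup (Nat.gcd m n) m M (Nat.mul_div_cancel' (Nat.gcd_dvd_left m n)) * (A ⊛ B) *
          (blowup (Nat.gcd m n) n M (Nat.mul_div_cancel' (Nat.gcd_dvd_right m n)))ᵀ =
        (blowup (Nat.gcd m n) m M (Nat.mul_div_cancel' (Nat.gcd_dvd_left m n)) * A *
            (blowup (Nat.gcd m n) n M (Nat.mul_div_cancel' (Nat.gcd_dvd_right m n)))ᵀ) ⊛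
          (blowup (Nat.gcd m n) m M (Nat.mul_div_cancel' (Nat.gcd_dvd_left m n)) * B *
            (blowup (Nat.gcd m n) n M (Nat.mul_div_cancel' (Nat.gcd_dvd_right m n)))ᵀ)) ∧
    Function.Bijective (fun A : Matrix (Fin m) (Fin n) ℝ =>
      blowup (Nat.gcd m n) m M (Nat.mul_div_cancel' (Nat.gcd_dvd_left m n)) * A *
        (blowup (Nat.gcd m n) n M (Nat.mul_div_cancel' (Nat.gcd_dvd_right m n)))ᵀ) ∧
    (blowup (Nat.gcd m n) n M (Nat.mul_div_cancel' (Nat.gcd_dvd_right m n)))ᵀ *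
        bridge n m * blowup (Nat.gcd m n) m M (Nat.mul_div_cancel' (Nat.gcd_dvd_left m n)) =
      bridge n m := by
  have hbridge := blowup_transpose_mul_bridge_mul_blowup hM
    (Nat.mul_div_cancel' (Nat.gcd_dvd_right m n)) (Nat.mul_div_cancel' (Nat.gcd_dvd_left m n))
  refine ⟨fun A B => by rw [Matrix.mul_add, Matrix.add_mul], fun A B => ?_,
    bijective_mul_mul_transpose (blowup_transpose_mul_self hM _) (blowup_transpose_mul_self hM _),
    hbridge⟩
  rw [dkstp_eq_mul_bridge_mul, dkstp_eq_mul_bridge_mul]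
  exact mul_mul_mul_eq_of_mul_mul_eq hbridge A B
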